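/- (Descartes' rule of signs, distinct-root form) Let p be a nonzero real polynomial with exactly t nonzero coefficients. Then the number of distinct positive real roots of p is at most t − 1. -/

import Mathlib

open Polynomial

/-- Rolle-type bound for positive roots: the number of positive roots of `p` is at most
the number of positive roots of its derivative plus one. -/
lemma pos_roots_card_le_derivative (p : Polynomial ℝ) :
    (p.roots.toFinset.filter (fun x => 0 < x)).card ≤
      ((derivative p).roots.toFinset.filter (fun x => 0 < x)).card + 1 := by
  rcases eq_or_ne (derivative p) 0 with hp' | hp'
  · rw [eq_C_of_derivative_eq_zero hp', roots_C, Multiset.toFinset_zero, Finset.filter_empty,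
      Finset.card_empty]
    exact Nat.zero_le _
  have hp : p ≠ 0 := ne_of_apply_ne derivative (by rwa [derivative_zero])
  refine Finset.card_le_of_interleaved fun x hx y hy hxy _ => ?_
  simp only [Finset.mem_filter, Multiset.mem_toFinset, mem_roots hp] at hx hy
  obtain ⟨z, hz1, hz2⟩ := exists_deriv_eq_zero hxy p.continuousOn (hx.1.trans hy.1.symm)
  refine ⟨z, Finset.mem_filter.2 ⟨Multiset.mem_toFinset.2 ((mem_roots hp').2 ?_),
    hx.2.trans hz1.1⟩, hz1.1, hz1.2⟩
  rwa [IsRoot, ← p.deriv]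

lemma aux_descartes : ∀ t : ℕ, ∀ p : Polynomial ℝ, p ≠ 0 → p.support.card = t →
    (p.roots.toFinset.filter (fun x => 0 < x)).card ≤ t - 1 := by
  intro t
  induction t using Nat.strong_induction_on with
  | _ t ih =>
  intro p hp ht
  -- factor out the largest power of X
  set m := p.natTrailingDegree with hm
  have hdvd : (X : Polynomial ℝ) ^ m ∣ p :=
    X_pow_dvd_iff.2 fun d hd => coeff_eq_zero_of_lt_natTrailingDegree hd
  obtain ⟨q, hq⟩ := hdvd
  rw [mul_comm] at hq
  have hq0 : q ≠ 0 := by rintro rfl; simp at hq; exact hp hq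
  -- q has nonzero constant coefficient
  have hqt : q.natTrailingDegree = 0 := by
    have := natTrailingDegree_mul_X_pow hq0 m
    rw [← hq, ← hm] at this
    omega
  have hc0 : q.coeff 0 ≠ 0 := by
    have h := mt coeff_natTrailingDegree_eq_zero.1 hq0
    rwa [hqt] at h
  -- supports have the same cardinality
  have hsupp : p.support = q.support.image (· + m) := by
    ext n
    simp only [mem_support_iff, Finset.mem_image, mem_support_iff, hq, coeff_mul_X_pow']
    constructor
    · intro h
      by_cases hn : m ≤ n
      · exact ⟨n - m, by simpa [hn] using h, by omega⟩
      · simp [hn] at h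
    · rintro ⟨a, ha, rfl⟩
      simpa using ha
  have hcard : q.support.card = t := by
    rw [← ht, hsupp, Finset.card_image_of_injective _ (add_left_injective m)]
  -- positive roots of p and q coincide
  have hroots : p.roots.toFinset.filter (fun x => 0 < x) =
      q.roots.toFinset.filter (fun x => 0 < x) := by
    ext x
    have heval : ∀ y : ℝ, eval y p = eval y q * y ^ m := by
      intro y; rw [hq, eval_mul, eval_pow, eval_X]
    simp only [Finset.mem_filter, Multiset.mem_toFinset, mem_roots hp, mem_roots hq0, IsRoot,
      heval]
    constructor
    · rintro ⟨h, hx⟩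
      rcases mul_eq_zero.1 h with h | h
      · exact ⟨h, hx⟩
      · exact absurd h (pow_ne_zero _ hx.ne')
    · rintro ⟨h, hx⟩
      exact ⟨by rw [h, zero_mul], hx⟩
  rw [hroots]
  -- case on whether the derivative vanishes
  rcases eq_or_ne (derivative q) 0 with hd | hd
  · rw [eq_C_of_derivative_eq_zero hd, roots_C, Multiset.toFinset_zero, Finset.filter_empty,
      Finset.card_empty]
    exact Nat.zero_le _
  -- support of the derivative
  have hzero : (0 : ℕ) ∈ q.support := mem_support_iff.2 hc0
  have herase : q.support.erase 0 = (derivative q).support.image (· + 1) := by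
    ext n
    simp only [Finset.mem_erase, Finset.mem_image, mem_support_derivative]
    constructor
    · rintro ⟨hn, hmem⟩
      exact ⟨n - 1, by rwa [Nat.sub_add_cancel (Nat.one_le_iff_ne_zero.2 hn)], by omega⟩
    · rintro ⟨a, ha, rfl⟩
      exact ⟨Nat.succ_ne_zero a, ha⟩
  have hdcard : (derivative q).support.card = t - 1 := by
    have h1 : (q.support.erase 0).card = t - 1 := by rw [Finset.card_erase_of_mem hzero, hcard]
    rw [← h1, herase, Finset.card_image_of_injective _ (add_left_injective 1)]
  have ht2 : 2 ≤ t := by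
    have h1 : (derivative q).support.Nonempty := support_nonempty.2 hd
    have := Finset.card_pos.2 h1
    omega
  have ihq : ((derivative q).roots.toFinset.filter (fun x => 0 < x)).card ≤ (t - 1) - 1 :=
    ih (t - 1) (by omega) (derivative q) hd hdcard
  have := pos_roots_card_le_derivative q
  omega

theorem stmt_6 (p : Polynomial ℝ) (hp : p ≠ 0) (t : ℕ) (ht : p.support.card = t) :
    (p.roots.toFinset.filter (fun x => 0 < x)).card ≤ t - 1 :=
  aux_descartes t p hp ht
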